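/- Let T_q be the algebraic quantum torus over a field k: the unital k-algebra generated by invertible U, V with UV = qVU for a unit q ∈ k. Equip T_q with the left bialgebroid structure over the subalgebra L = k[U, U⁻¹]: s_L = t_L the inclusion, γ_L(Uⁿ Vᵐ) = Uⁿ Vᵐ ⊗_L Vᵐ, π_L(Uⁿ Vᵐ) = Uⁿ. Define S(Uⁿ Vᵐ) = V⁻ᵐ Uⁿ. Then (this left bialgebroid, S) is a Hopf algebroid: S is a ring anti-automorphism satisfying S ∘ t_L = s_L and the two antipode axioms S⁻¹(a₍₂₎)₍₁'₎ ⊗ S⁻¹(a₍₂₎)₍₂'₎ a₍₁₎ = S⁻¹(a) ⊗ 1 and S(a₍₁₎)₍₁'₎ a₍₂₎ ⊗ S(a₍₁₎)₍₂'₎ = 1 ⊗ S(a). -/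

import Mathlib

open scoped TensorProduct

namespace HopfAlgd

variable (A : Type*) [Ring A]

/-- `x ⊗ (y ⊗ z) ↦ (y * x) ⊗ z`. -/
noncomputable def m13 : A ⊗[ℤ] (A ⊗[ℤ] A) →ₗ[ℤ] A ⊗[ℤ] A :=
  (LinearMap.rTensor A (LinearMap.mul' ℤ A)) ∘ₗ
  (TensorProduct.assoc ℤ A A A).symm.toLinearMap ∘ₗ
  (LinearMap.lTensor A (TensorProduct.comm ℤ A A).toLinearMap) ∘ₗ
  (TensorProduct.assoc ℤ A A A).toLinearMap ∘ₗ
  (TensorProduct.comm ℤ A (A ⊗[ℤ] A)).toLinearMap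

/-- `x ⊗ (y ⊗ z) ↦ y ⊗ (z * x)`. -/
noncomputable def m23 : A ⊗[ℤ] (A ⊗[ℤ] A) →ₗ[ℤ] A ⊗[ℤ] A :=
  (LinearMap.lTensor A (LinearMap.mul' ℤ A)) ∘ₗ
  (TensorProduct.assoc ℤ A A A).toLinearMap ∘ₗ
  (TensorProduct.comm ℤ A (A ⊗[ℤ] A)).toLinearMap

/-- `(x ⊗ y) ⊗ z ↦ (x * z) ⊗ y`. -/
noncomputable def m13' : (A ⊗[ℤ] A) ⊗[ℤ] A →ₗ[ℤ] A ⊗[ℤ] A :=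
  (LinearMap.rTensor A (LinearMap.mul' ℤ A)) ∘ₗ
  (TensorProduct.assoc ℤ A A A).symm.toLinearMap ∘ₗ
  (LinearMap.lTensor A (TensorProduct.comm ℤ A A).toLinearMap) ∘ₗ
  (TensorProduct.assoc ℤ A A A).toLinearMap

/-- `(x ⊗ y) ⊗ z ↦ x ⊗ (y * z)`. -/
noncomputable def m23' : (A ⊗[ℤ] A) ⊗[ℤ] A →ₗ[ℤ] A ⊗[ℤ] A :=
  (LinearMap.lTensor A (LinearMap.mul' ℤ A)) ∘ₗ (TensorProduct.assoc ℤ A A A).toLinearMap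

variable {A}

/-- The subgroup of `A ⊗[ℤ] A` implementing the tensor product over a base ring, where the
relevant right action on the first factor is `f` and left action on the second factor is `g`. -/
def trel {L : Type*} (f g : L → A → A) : Submodule ℤ (A ⊗[ℤ] A) :=
  Submodule.span ℤ {x | ∃ (l : L) (a b : A), x = f l a ⊗ₜ[ℤ] b - a ⊗ₜ[ℤ] g l b}

/-- Analogue of `trel` for threefold tensor products. -/
def trel3 {L R : Type*} (f g : L → A → A) (f' g' : R → A → A) :
    Submodule ℤ (A ⊗[ℤ] (A ⊗[ℤ] A)) :=
  Submodule.span ℤ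
    ({x | ∃ (l : L) (a b c : A),
        x = f l a ⊗ₜ[ℤ] (b ⊗ₜ[ℤ] c) - a ⊗ₜ[ℤ] (g l b ⊗ₜ[ℤ] c)} ∪
     {x | ∃ (r : R) (a b c : A),
        x = a ⊗ₜ[ℤ] (f' r b ⊗ₜ[ℤ] c) - a ⊗ₜ[ℤ] (b ⊗ₜ[ℤ] g' r c)})

variable (A) in
/-- The data of a left bialgebroid: source and target maps, a chosen (Sweedler
representative of the) coproduct, and the counit. -/
structure LeftBialgebroidData (L : Type*) [Ring L] where
  s : L →+* A
  t : L →+ A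
  t_one : t 1 = 1
  t_mul : ∀ l l', t (l * l') = t l' * t l
  st_comm : ∀ l l', s l * t l' = t l' * s l
  Δ : A →+ A ⊗[ℤ] A
  π : A →+ L

variable {L R : Type*} [Ring L] [Ring R]

/-- The subgroup of `A ⊗[ℤ] A` by which one quotients to get `A_L ⊗_L _L A`. -/
def LeftBialgebroidData.rel (B : LeftBialgebroidData A L) : Submodule ℤ (A ⊗[ℤ] A) :=
  trel (fun l a => B.t l * a) (fun l b => B.s l * b)

def LeftBialgebroidData.rel3 (B : LeftBialgebroidData A L) :
    Submodule ℤ (A ⊗[ℤ] (A ⊗[ℤ] A)) :=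
  trel3 (fun l a => B.t l * a) (fun l b => B.s l * b)
        (fun l a => B.t l * a) (fun l b => B.s l * b)

variable (A) in
/-- A left bialgebroid (Takeuchi `×_L`-bialgebra), with the comonoid structure encoded via a
chosen additive lift `Δ` of the coproduct `γ_L`; all equalities in `A ⊗_L A` are expressed
as membership of differences in the relation subgroup `rel`. -/
structure LeftBialgebroid (L : Type*) [Ring L] extends LeftBialgebroidData A L where
  coassoc : ∀ a, (LinearMap.lTensor A Δ.toIntLinearMap) (Δ a)
      - @id (A ⊗[ℤ] (A ⊗[ℤ] A))
          ((TensorProduct.assoc ℤ A A A) ((LinearMap.rTensor A Δ.toIntLinearMap) (Δ a)))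
      ∈ toLeftBialgebroidData.rel3
  cros : ∀ a l, (LinearMap.rTensor A (LinearMap.mulRight ℤ (t l))) (Δ a)
      - (LinearMap.lTensor A (LinearMap.mulRight ℤ (s l))) (Δ a) ∈ toLeftBialgebroidData.rel
  Δ_one : Δ 1 - (1 : A) ⊗ₜ[ℤ] (1 : A) ∈ toLeftBialgebroidData.rel
  Δ_mul : ∀ a b, Δ (a * b) - Δ a * Δ b ∈ toLeftBialgebroidData.rel
  counit_s : ∀ a, LinearMap.mul' ℤ A
      ((LinearMap.rTensor A (s.toAddMonoidHom.comp π).toIntLinearMap) (Δ a)) = a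
  counit_t : ∀ a, LinearMap.mul' ℤ A ((TensorProduct.comm ℤ A A)
      ((LinearMap.lTensor A (t.comp π).toIntLinearMap) (Δ a))) = a
  π_one : π 1 = 1
  π_s : ∀ a b, π (a * s (π b)) = π (a * b)
  π_t : ∀ a b, π (a * t (π b)) = π (a * b)
  π_bimod : ∀ l l' a, π (s l * (t l' * a)) = l * π a * l'

def LeftBialgebroid.rel (B : LeftBialgebroid A L) : Submodule ℤ (A ⊗[ℤ] A) :=
  B.toLeftBialgebroidData.rel

variable (A) in
/-- The data of a right bialgebroid. -/
structure RightBialgebroidData (R : Type*) [Ring R] where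
  s : R →+* A
  t : R →+ A
  t_one : t 1 = 1
  t_mul : ∀ r r', t (r * r') = t r' * t r
  st_comm : ∀ r r', s r * t r' = t r' * s r
  Δ : A →+ A ⊗[ℤ] A
  π : A →+ R

/-- The subgroup of `A ⊗[ℤ] A` by which one quotients to get `A^R ⊗_R ^R A`. -/
def RightBialgebroidData.rel (B : RightBialgebroidData A R) : Submodule ℤ (A ⊗[ℤ] A) :=
  trel (fun r a => a * B.s r) (fun r b => b * B.t r)

def RightBialgebroidData.rel3 (B : RightBialgebroidData A R) :
    Submodule ℤ (A ⊗[ℤ] (A ⊗[ℤ] A)) :=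
  trel3 (fun r a => a * B.s r) (fun r b => b * B.t r)
        (fun r a => a * B.s r) (fun r b => b * B.t r)

variable (A) in
/-- A right bialgebroid, with chosen additive lift `Δ` of the coproduct `γ_R`. -/
structure RightBialgebroid (R : Type*) [Ring R] extends RightBialgebroidData A R where
  coassoc : ∀ a, (LinearMap.lTensor A Δ.toIntLinearMap) (Δ a)
      - @id (A ⊗[ℤ] (A ⊗[ℤ] A))
          ((TensorProduct.assoc ℤ A A A) ((LinearMap.rTensor A Δ.toIntLinearMap) (Δ a)))
      ∈ toRightBialgebroidData.rel3
  cros : ∀ a r, (LinearMap.rTensor A (LinearMap.mulLeft ℤ (s r))) (Δ a)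
      - (LinearMap.lTensor A (LinearMap.mulLeft ℤ (t r))) (Δ a) ∈ toRightBialgebroidData.rel
  Δ_one : Δ 1 - (1 : A) ⊗ₜ[ℤ] (1 : A) ∈ toRightBialgebroidData.rel
  Δ_mul : ∀ a b, Δ (a * b) - Δ a * Δ b ∈ toRightBialgebroidData.rel
  counit_s : ∀ a, LinearMap.mul' ℤ A
      ((LinearMap.lTensor A (s.toAddMonoidHom.comp π).toIntLinearMap) (Δ a)) = a
  counit_t : ∀ a, LinearMap.mul' ℤ A ((TensorProduct.comm ℤ A A)
      ((LinearMap.rTensor A (t.comp π).toIntLinearMap) (Δ a))) = a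
  π_one : π 1 = 1
  π_s : ∀ a b, π (s (π a) * b) = π (a * b)
  π_t : ∀ a b, π (t (π a) * b) = π (a * b)
  π_bimod : ∀ r r' a, π (a * s r' * t r) = r * π a * r'

def RightBialgebroid.rel (B : RightBialgebroid A R) : Submodule ℤ (A ⊗[ℤ] A) :=
  B.toRightBialgebroidData.rel

/-- The expression `a ↦ ∑ (f a₍₁₎)₍₁'₎ a₍₂₎ ⊗ (f a₍₁₎)₍₂'₎` (applied to `Δ a`). -/
noncomputable def axsExpr (Δ : A →+ A ⊗[ℤ] A) (f : A →+ A) :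
    A ⊗[ℤ] A →ₗ[ℤ] A ⊗[ℤ] A :=
  m13' A ∘ₗ LinearMap.rTensor A (Δ.toIntLinearMap ∘ₗ f.toIntLinearMap)

/-- The expression `a ↦ ∑ (f a₍₂₎)₍₁'₎ ⊗ (f a₍₂₎)₍₂'₎ a₍₁₎` (applied to `Δ a`). -/
noncomputable def axsiExpr (Δ : A →+ A ⊗[ℤ] A) (f : A →+ A) :
    A ⊗[ℤ] A →ₗ[ℤ] A ⊗[ℤ] A :=
  m23 A ∘ₗ LinearMap.lTensor A (Δ.toIntLinearMap ∘ₗ f.toIntLinearMap)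

/-- Definition 4.1 of Böhm–Szlachányi: a Hopf algebroid is a left bialgebroid together with a
ring anti-automorphism `S` such that `S ∘ t_L = s_L` and the two antipode axioms hold. -/
structure IsHopfAlgebroid (B : LeftBialgebroid A L) (S : A ≃+ A) : Prop where
  anti_mul : ∀ a b, S (a * b) = S b * S a
  one_map : S 1 = 1
  S_t : ∀ l, S (B.t l) = B.s l
  axs : ∀ a, axsExpr B.Δ S.toAddMonoidHom (B.Δ a) - (1 : A) ⊗ₜ[ℤ] S a ∈ B.rel
  axsi : ∀ a, axsiExpr B.Δ S.symm.toAddMonoidHom (B.Δ a) - S.symm a ⊗ₜ[ℤ] (1 : A) ∈ B.rel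

/-- The relation subgroup for `A_L ⊗_L (_L A^R) ⊗_R (^R A)`. -/
def mixedRel₁ (Bl : LeftBialgebroidData A L) (Br : RightBialgebroidData A R) :
    Submodule ℤ (A ⊗[ℤ] (A ⊗[ℤ] A)) :=
  trel3 (fun l a => Bl.t l * a) (fun l b => Bl.s l * b)
        (fun r b => b * Br.s r) (fun r c => c * Br.t r)

/-- The relation subgroup for `A^R ⊗_R (^R A_L) ⊗_L (_L A)`. -/
def mixedRel₂ (Bl : LeftBialgebroidData A L) (Br : RightBialgebroidData A R) :
    Submodule ℤ (A ⊗[ℤ] (A ⊗[ℤ] A)) :=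
  trel3 (fun r a => a * Br.s r) (fun r b => b * Br.t r)
        (fun l b => Bl.t l * b) (fun l c => Bl.s l * c)

variable (A L R) in
/-- A symmetrized Hopf algebroid in the sense of Proposition 4.2 (iii) of Böhm–Szlachányi:
compatible left and right bialgebroid structures over anti-isomorphic base rings, connected
by an additive bijection `S` satisfying the twisted bimodule and antipode conditions. -/
structure SymHopfAlgebroid : Type _ where
  left : LeftBialgebroid A L
  right : RightBialgebroid A R
  S : A ≃+ A
  base_op : Nonempty (L ≃+* Rᵐᵒᵖ)
  st_img : ∀ l, ∃ r, left.s l = right.t r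
  ts_img : ∀ r, ∃ l, right.t r = left.s l
  ts_img' : ∀ l, ∃ r, left.t l = right.s r
  st_img' : ∀ r, ∃ l, right.s r = left.t l
  mixed₁ : ∀ a, @id (A ⊗[ℤ] (A ⊗[ℤ] A)) ((TensorProduct.assoc ℤ A A A)
        ((LinearMap.rTensor A left.Δ.toIntLinearMap) (right.Δ a)))
      - (LinearMap.lTensor A right.Δ.toIntLinearMap) (left.Δ a)
      ∈ mixedRel₁ left.toLeftBialgebroidData right.toRightBialgebroidData
  mixed₂ : ∀ a, @id (A ⊗[ℤ] (A ⊗[ℤ] A)) ((TensorProduct.assoc ℤ A A A)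
        ((LinearMap.rTensor A right.Δ.toIntLinearMap) (left.Δ a)))
      - (LinearMap.lTensor A left.Δ.toIntLinearMap) (right.Δ a)
      ∈ mixedRel₂ left.toLeftBialgebroidData right.toRightBialgebroidData
  S_twist_L : ∀ l l' a, S (left.t l * a * left.t l') = left.s l' * S a * left.s l
  S_twist_R : ∀ r r' a, S (right.t r' * a * right.t r) = right.s r * S a * right.s r'
  antipode_L : ∀ a, LinearMap.mul' ℤ A
      ((LinearMap.rTensor A S.toAddMonoidHom.toIntLinearMap) (left.Δ a))
      = right.s (right.π a)
  antipode_R : ∀ a, LinearMap.mul' ℤ A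
      ((LinearMap.lTensor A S.toAddMonoidHom.toIntLinearMap) (right.Δ a))
      = left.s (left.π a)

namespace SymHopfAlgebroid

variable (H : SymHopfAlgebroid A L R)

/-- Left integrals: invariants of the left regular module. -/
def IsLeftIntegral (ℓ : A) : Prop := ∀ a, a * ℓ = H.left.s (H.left.π a) * ℓ

/-- Right integrals: invariants of the right regular module. -/
def IsRightIntegral (x : A) : Prop := ∀ a, x * a = x * H.right.s (H.right.π a)

/-- Membership in the dual `A^* = Hom(A^R, R^R)`. -/
def InAstarR (φ : A →+ R) : Prop := ∀ a r, φ (a * H.right.s r) = φ a * r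

/-- Membership in the dual `^*A = Hom(^R A, ^R R)`. -/
def InstarAR (φ : A →+ R) : Prop := ∀ a r, φ (a * H.right.t r) = r * φ a

/-- Membership in the dual `A_* = Hom(A_L, L_L)`. -/
def InAstarL (φ : A →+ L) : Prop := ∀ a l, φ (H.left.t l * a) = φ a * l

/-- Membership in the dual `_*A = Hom(_L A, _L L)`. -/
def InstarAL (φ : A →+ L) : Prop := ∀ a l, φ (H.left.s l * a) = l * φ a

/-- `φ ⇀ a = a⁽²⁾ t_R (φ a⁽¹⁾)`. -/
noncomputable def rharp (φ : A →+ R) (a : A) : A :=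
  LinearMap.mul' ℤ A ((TensorProduct.comm ℤ A A)
    ((LinearMap.rTensor A (H.right.t.comp φ).toIntLinearMap) (H.right.Δ a)))

/-- `φ ⇁ a = a⁽¹⁾ s_R (φ a⁽²⁾)`. -/
noncomputable def lharp (φ : A →+ R) (a : A) : A :=
  LinearMap.mul' ℤ A
    ((LinearMap.lTensor A (H.right.s.toAddMonoidHom.comp φ).toIntLinearMap) (H.right.Δ a))

/-- `a ↼ φ = s_L (φ a₍₁₎) a₍₂₎`. -/
noncomputable def rharpL (φ : A →+ L) (a : A) : A :=
  LinearMap.mul' ℤ A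
    ((LinearMap.rTensor A (H.left.s.toAddMonoidHom.comp φ).toIntLinearMap) (H.left.Δ a))

/-- `a ↽ φ = t_L (φ a₍₂₎) a₍₁₎`. -/
noncomputable def lharpL (φ : A →+ L) (a : A) : A :=
  LinearMap.mul' ℤ A ((TensorProduct.comm ℤ A A)
    ((LinearMap.lTensor A (H.left.t.comp φ).toIntLinearMap) (H.left.Δ a)))

/-- Non-degeneracy of a left integral: the maps `ℓ_R : A^* → A` and `_Rℓ : ^*A → A`
are bijective. -/
def IsNonDegLeftIntegral (ℓ : A) : Prop :=
  H.IsLeftIntegral ℓ ∧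
  Function.Bijective (fun φ : {φ : A →+ R // H.InAstarR φ} => H.rharp φ.1 ℓ) ∧
  Function.Bijective (fun φ : {φ : A →+ R // H.InstarAR φ} => H.lharp φ.1 ℓ)

end SymHopfAlgebroid

end HopfAlgd

/-!
Every element of `T_q` is a `k`-linear combination of the monomials `UⁿVᵐ`, which multiply by
`(UⁿVᵐ)(UʳVˢ) = q^(-mr) U^(n+r) V^(m+s)` since `VᵐUⁿ = q^(-mn) UⁿVᵐ`. Hence every axiom that is
an identity between (bi)linear maps, such as multiplicativity of `γ_L`, the counit axioms and `S`
being an involutive anti-automorphism fixing `L`, reduces to a check on monomials. The antipode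
axioms only hold in `A ⊗_L A`: on `a = c UⁿVᵐ` each of them is, up to sign, a single defining
relation `l x ⊗ y - x ⊗ l y` of the balanced tensor product, for `l = V⁻ᵐ a`. This `l` lies in `L`
because conjugation by `V` rescales `U` by `q⁻¹` and so preserves `L = k[U, U⁻¹]`; the same fact
gives the Takeuchi condition on `γ_L`.
-/

theorem zpow_mul_zpow_of_mul_eq_mul_mul {G : Type*} [Group G] {Q U V : G}
    (hQ : ∀ g, Commute Q g) (h : U * V = Q * (V * U)) (m n : ℤ) :
    V ^ m * U ^ n = Q ^ (-(m * n)) * (U ^ n * V ^ m) := by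
  have hUV : SemiconjBy U (V ^ m) (Q ^ m * V ^ m) := by
    rw [← (hQ V).mul_zpow]
    exact SemiconjBy.zpow_right (by rw [SemiconjBy, h, mul_assoc]) m
  have hVU : SemiconjBy (V ^ m) U (Q ^ (-m) * U) := by
    rw [SemiconjBy, mul_assoc, hUV.eq, ← mul_assoc, ← mul_assoc, ← zpow_add, neg_add_cancel,
      zpow_zero, one_mul]
  rw [(hVU.zpow_right n).eq, ((hQ U).zpow_left (-m)).mul_zpow, ← zpow_mul, mul_assoc, neg_mul]

theorem Submodule.span_range_smul_induction {R M ι : Type*} [Semiring R] [AddCommMonoid M]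
    [Module R M] {v : ι → M} {P : M → Prop} (zero : P 0)
    (add : ∀ x y, P x → P y → P (x + y)) (smul : ∀ (c : R) i, P (c • v i)) {x : M}
    (hx : x ∈ span R (Set.range v)) : P x := by
  suffices ∀ c : R, P (c • x) by simpa using this 1
  induction hx using Submodule.span_induction with
  | mem y hy => obtain ⟨i, rfl⟩ := hy; exact (smul · i)
  | zero => simpa using zero
  | add y z _ _ hy hz => exact fun c => by simpa [smul_add] using add _ _ (hy c) (hz c)
  | smul d y _ hy => exact fun c => by simpa [smul_smul] using hy (c * d)

theorem Module.Basis.induction_smul {R M ι : Type*} [Semiring R] [AddCommMonoid M]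
    [Module R M] (b : Module.Basis ι R M) {P : M → Prop} (zero : P 0)
    (add : ∀ x y, P x → P y → P (x + y)) (smul : ∀ (c : R) i, P (c • b i)) (x : M) : P x :=
  Submodule.span_range_smul_induction zero add smul (b.span_eq ▸ Submodule.mem_top)

theorem Algebra.adjoin_unit_inv_le_span_zpow {k A : Type*} [CommSemiring k] [Semiring A]
    [Algebra k A] (U : Aˣ) :
    Subalgebra.toSubmodule (Algebra.adjoin k {(U : A), ((U⁻¹ : Aˣ) : A)}) ≤
      Submodule.span k (Set.range fun n : ℤ => ((U ^ n : Aˣ) : A)) := by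
  rw [Algebra.adjoin_eq_span]
  refine Submodule.span_mono fun x hx => ?_
  induction hx using Submonoid.closure_induction with
  | mem x hx => rcases hx with rfl | rfl; exacts [⟨1, by simp⟩, ⟨-1, by simp⟩]
  | one => exact ⟨0, by simp⟩
  | mul x y _ _ hx hy =>
    obtain ⟨n, rfl⟩ := hx
    obtain ⟨m, rfl⟩ := hy
    exact ⟨n + m, by simp [zpow_add]⟩

theorem sub_mem_of_eq {M S : Type*} [AddGroup M] [SetLike S M] [AddSubgroupClass S M] {s : S}
    {x y : M} (h : x = y) : x - y ∈ s := by
  rw [h, sub_self]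
  exact zero_mem s

namespace HopfAlgd

variable {A : Type*} [Ring A]

theorem axsExpr_tmul_of_eq {Δ : A →+ A ⊗[ℤ] A} {f : A →+ A} {a b x y : A}
    (h : Δ (f a) = x ⊗ₜ[ℤ] y) : axsExpr Δ f (a ⊗ₜ[ℤ] b) = (x * b) ⊗ₜ[ℤ] y := by
  change m13' A (Δ (f a) ⊗ₜ[ℤ] b) = _
  rw [h]
  rfl

theorem axsiExpr_tmul_of_eq {Δ : A →+ A ⊗[ℤ] A} {f : A →+ A} {a b x y : A}
    (h : Δ (f b) = x ⊗ₜ[ℤ] y) : axsiExpr Δ f (a ⊗ₜ[ℤ] b) = x ⊗ₜ[ℤ] (y * a) := by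
  change m23 A (a ⊗ₜ[ℤ] Δ (f b)) = _
  rw [h]
  rfl

end HopfAlgd

namespace QuantumTorus

open TensorProduct

variable {k A : Type*} [Field k] [Ring A] [Algebra k A]

section Commutation

variable {q : kˣ} {U V : Aˣ} (hq : (U : A) * V = (q : k) • ((V : A) * U))
include hq

theorem units_zpow_mul_zpow (m n : ℤ) :
    ((V ^ m * U ^ n : Aˣ) : A) = (q : k) ^ (-(m * n)) • ((U ^ n * V ^ m : Aˣ) : A) := by
  set Q : Aˣ := Units.map (algebraMap k A : k →* A) q
  have hQ : ∀ g, Commute Q g := fun g => Units.ext (Algebra.commutes _ _)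
  have h : U * V = Q * (V * U) := Units.ext (by simpa [Q, Algebra.smul_def] using hq)
  have key := congrArg Units.val (zpow_mul_zpow_of_mul_eq_mul_mul hQ h m n)
  simp only [Q, ← map_zpow, Units.val_mul, Units.coe_map, MonoidHom.coe_coe,
    Units.val_zpow_eq_zpow_val] at key
  rw [Units.val_mul, key, Algebra.smul_def, Units.val_mul]

theorem monomial_mul_monomial (n m r s : ℤ) :
    ((U ^ n * V ^ m : Aˣ) : A) * ↑(U ^ r * V ^ s)
      = (q : k) ^ (-(m * r)) • ((U ^ (n + r) * V ^ (m + s) : Aˣ) : A) := by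
  rw [Units.val_mul, Units.val_mul, mul_assoc, ← mul_assoc (V ^ m : Aˣ).val, ← Units.val_mul,
    units_zpow_mul_zpow hq, smul_mul_assoc, mul_smul_comm, ← Units.val_mul, ← Units.val_mul]
  simp only [zpow_add, mul_assoc]

end Commutation

variable (k) in
abbrev laurentSubalgebra (U : Aˣ) : Subalgebra k A :=
  Algebra.adjoin k {(U : A), ((U⁻¹ : Aˣ) : A)}

theorem units_zpow_mem_laurentSubalgebra (U : Aˣ) (n : ℤ) :
    ((U ^ n : Aˣ) : A) ∈ laurentSubalgebra k U := by
  cases n with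
  | ofNat j => simpa using pow_mem (Algebra.subset_adjoin (by simp)) j
  | negSucc j =>
    rw [zpow_negSucc, ← inv_pow, Units.val_pow_eq_pow_val]
    exact pow_mem (Algebra.subset_adjoin (by simp)) _

@[elab_as_elim]
theorem laurentSubalgebra_induction {U : Aˣ} {P : A → Prop} (zero : P 0)
    (add : ∀ x y, P x → P y → P (x + y)) (smul_zpow : ∀ (c : k) (n : ℤ), P (c • ↑(U ^ n)))
    {x : A} (hx : x ∈ laurentSubalgebra k U) : P x :=
  Submodule.span_range_smul_induction zero add smul_zpow
    (Algebra.adjoin_unit_inv_le_span_zpow U hx)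

instance (U : Aˣ) : IsMulCommutative (laurentSubalgebra k U) :=
  Algebra.isMulCommutative_adjoin k <| by
    rintro a (rfl | rfl) b (rfl | rfl) <;> simp

theorem units_zpow_mul_mul_zpow_neg_mem_laurentSubalgebra {q : kˣ} {U V : Aˣ}
    (hq : (U : A) * V = (q : k) • ((V : A) * U)) (m : ℤ) {x : A}
    (hx : x ∈ laurentSubalgebra k U) : ↑(V ^ m) * x * ↑(V ^ (-m)) ∈ laurentSubalgebra k U := by
  refine laurentSubalgebra_induction (by simp) (fun x y hx hy => ?_) (fun c n => ?_) hx
  · simpa [mul_add, add_mul] using add_mem hx hy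
  · rw [mul_smul_comm, smul_mul_assoc, ← Units.val_mul, units_zpow_mul_zpow hq, smul_mul_assoc,
      ← Units.val_mul, mul_assoc, ← zpow_add, add_neg_cancel, zpow_zero, mul_one]
    exact Subalgebra.smul_mem _ (Subalgebra.smul_mem _ (units_zpow_mem_laurentSubalgebra U n) _) _

theorem units_zpow_neg_mul_smul_monomial_mem_laurentSubalgebra {q : kˣ} {U V : Aˣ}
    (hq : (U : A) * V = (q : k) • ((V : A) * U)) (c : k) (n m : ℤ) :
    ((V ^ (-m) : Aˣ) : A) * (c • ((U ^ n * V ^ m : Aˣ) : A)) ∈ laurentSubalgebra k U := by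
  have := units_zpow_mul_mul_zpow_neg_mem_laurentSubalgebra hq (-m)
    (units_zpow_mem_laurentSubalgebra U n)
  rw [neg_neg] at this
  rw [mul_smul_comm, Units.val_mul, ← mul_assoc]
  exact Subalgebra.smul_mem _ this c

structure IsQuantumTorusBasis (q : kˣ) (U V : Aˣ) (e : Module.Basis (ℤ × ℤ) k A) : Prop where
  mul_eq_smul_mul : (U : A) * V = (q : k) • ((V : A) * U)
  apply_eq : ∀ p : ℤ × ℤ, e p = ((U ^ p.1 * V ^ p.2 : Aˣ) : A)

noncomputable def coproduct (V : Aˣ) (e : Module.Basis (ℤ × ℤ) k A) : A →ₗ[k] A ⊗[ℤ] A :=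
  e.constr k fun p => e p ⊗ₜ ((V ^ p.2 : Aˣ) : A)

noncomputable def counit (U : Aˣ) (e : Module.Basis (ℤ × ℤ) k A) :
    A →ₗ[k] laurentSubalgebra k U :=
  e.constr k fun p => ⟨_, units_zpow_mem_laurentSubalgebra U p.1⟩

noncomputable def antipode (U V : Aˣ) (e : Module.Basis (ℤ × ℤ) k A) : A →ₗ[k] A :=
  e.constr k fun p => ((V ^ (-p.2) * U ^ p.1 : Aˣ) : A)

noncomputable def bialgebroidData (U V : Aˣ) (e : Module.Basis (ℤ × ℤ) k A) :
    HopfAlgd.LeftBialgebroidData A (laurentSubalgebra k U) where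
  s := (laurentSubalgebra k U).val
  t := (laurentSubalgebra k U).val.toAddMonoidHom
  t_one := rfl
  t_mul l l' := by simp [mul_comm' l l']
  st_comm l l' := congrArg Subtype.val (mul_comm' l l')
  Δ := (coproduct V e).toAddMonoidHom
  π := (counit U e).toAddMonoidHom

theorem mul_tmul_sub_tmul_mul_mem_rel {U : Aˣ} (V : Aˣ) (e : Module.Basis (ℤ × ℤ) k A) {l : A}
    (hl : l ∈ laurentSubalgebra k U) (a b : A) :
    (l * a) ⊗ₜ[ℤ] b - a ⊗ₜ[ℤ] (l * b) ∈ (bialgebroidData U V e).rel :=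
  Submodule.subset_span ⟨⟨l, hl⟩, a, b, rfl⟩

namespace IsQuantumTorusBasis

variable {q : kˣ} {U V : Aˣ} {e : Module.Basis (ℤ × ℤ) k A}

@[elab_as_elim]
theorem induction (h : IsQuantumTorusBasis q U V e) {P : A → Prop} (zero : P 0)
    (add : ∀ x y, P x → P y → P (x + y))
    (smul_monomial : ∀ (c : k) (n m : ℤ), P (c • ((U ^ n * V ^ m : Aˣ) : A))) (a : A) : P a :=
  e.induction_smul zero add (fun c p => h.apply_eq p ▸ smul_monomial c p.1 p.2) a

theorem linearMap_ext (h : IsQuantumTorusBasis q U V e) {M : Type*} [AddCommGroup M]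
    [Module k M] {f g : A →ₗ[k] M}
    (hfg : ∀ n m : ℤ, f ((U ^ n * V ^ m : Aˣ) : A) = g ((U ^ n * V ^ m : Aˣ) : A)) : f = g :=
  e.ext fun p => h.apply_eq p ▸ hfg p.1 p.2

theorem bilinearMap_ext (h : IsQuantumTorusBasis q U V e) {M : Type*} [AddCommGroup M]
    [Module k M] {f g : A →ₗ[k] A →ₗ[k] M}
    (hfg : ∀ n m r s : ℤ, f ((U ^ n * V ^ m : Aˣ) : A) ((U ^ r * V ^ s : Aˣ) : A)
      = g ((U ^ n * V ^ m : Aˣ) : A) ((U ^ r * V ^ s : Aˣ) : A)) : f = g :=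
  LinearMap.ext_basis e e fun p p' => h.apply_eq p ▸ h.apply_eq p' ▸ hfg p.1 p.2 p'.1 p'.2

theorem antipode_monomial (h : IsQuantumTorusBasis q U V e) (n m : ℤ) :
    antipode U V e ((U ^ n * V ^ m : Aˣ) : A) = ((V ^ (-m) * U ^ n : Aˣ) : A) := by
  rw [← h.apply_eq (n, m), antipode, e.constr_basis]

theorem antipode_involutive (h : IsQuantumTorusBasis q U V e) :
    Function.Involutive (antipode U V e) := by
  have : (antipode U V e).comp (antipode U V e) = LinearMap.id := h.linearMap_ext fun n m => by
    simp only [LinearMap.comp_apply, LinearMap.id_apply, h.antipode_monomial,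
      units_zpow_mul_zpow h.mul_eq_smul_mul, map_smul, neg_neg, smul_smul,
      ← zpow_add₀ (Units.ne_zero q)]
    simp
  exact LinearMap.congr_fun this

theorem antipode_mul (h : IsQuantumTorusBasis q U V e) (a b : A) :
    antipode U V e (a * b) = antipode U V e b * antipode U V e a := by
  have : (LinearMap.mul k A).compr₂ (antipode U V e)
      = (LinearMap.mul k A).flip.compl₁₂ (antipode U V e) (antipode U V e) :=
    h.bilinearMap_ext fun n m r s => by
      simp only [LinearMap.compr₂_apply, LinearMap.compl₁₂_apply, LinearMap.flip_apply,
        LinearMap.mul_apply', monomial_mul_monomial h.mul_eq_smul_mul, map_smul,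
        LinearMap.smul_apply, h.antipode_monomial, units_zpow_mul_zpow h.mul_eq_smul_mul,
        smul_smul, ← zpow_add₀ (Units.ne_zero q)]
      ring_nf
  exact LinearMap.congr_fun₂ this a b

theorem antipode_one (h : IsQuantumTorusBasis q U V e) : antipode U V e 1 = 1 := by
  simpa using h.antipode_monomial 0 0

theorem antipode_of_mem (h : IsQuantumTorusBasis q U V e) {x : A}
    (hx : x ∈ laurentSubalgebra k U) : antipode U V e x = x := by
  refine laurentSubalgebra_induction (by simp) (fun x y hx hy => ?_) (fun c n => ?_) hx
  · rw [map_add, hx, hy]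
  · simpa using congrArg (c • ·) (h.antipode_monomial n 0)

noncomputable def antipodeEquiv (h : IsQuantumTorusBasis q U V e) : A ≃+ A where
  toFun := antipode U V e
  invFun := antipode U V e
  left_inv := h.antipode_involutive
  right_inv := h.antipode_involutive
  map_add' := map_add _

theorem coproduct_monomial (h : IsQuantumTorusBasis q U V e) (n m : ℤ) :
    coproduct V e ((U ^ n * V ^ m : Aˣ) : A)
      = ((U ^ n * V ^ m : Aˣ) : A) ⊗ₜ ((V ^ m : Aˣ) : A) := by
  rw [← h.apply_eq (n, m), coproduct, e.constr_basis]

theorem coproduct_smul_monomial (h : IsQuantumTorusBasis q U V e) (c : k) (n m : ℤ) :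
    coproduct V e (c • ((U ^ n * V ^ m : Aˣ) : A))
      = (c • ((U ^ n * V ^ m : Aˣ) : A)) ⊗ₜ ((V ^ m : Aˣ) : A) := by
  rw [map_smul, h.coproduct_monomial, smul_tmul']

theorem coproduct_units_zpow_mul_zpow (h : IsQuantumTorusBasis q U V e) (n m : ℤ) :
    coproduct V e ((V ^ m * U ^ n : Aˣ) : A)
      = ((V ^ m * U ^ n : Aˣ) : A) ⊗ₜ ((V ^ m : Aˣ) : A) := by
  rw [units_zpow_mul_zpow h.mul_eq_smul_mul, h.coproduct_smul_monomial]

theorem coproduct_one (h : IsQuantumTorusBasis q U V e) :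
    coproduct V e 1 = (1 : A) ⊗ₜ[ℤ] (1 : A) := by
  simpa using h.coproduct_monomial 0 0

theorem coproduct_mul (h : IsQuantumTorusBasis q U V e) (a b : A) :
    coproduct V e (a * b) = coproduct V e a * coproduct V e b := by
  have : (LinearMap.mul k A).compr₂ (coproduct V e)
      = (LinearMap.mul k (A ⊗[ℤ] A)).compl₁₂ (coproduct V e) (coproduct V e) :=
    h.bilinearMap_ext fun n m r s => by
      simp only [LinearMap.compr₂_apply, LinearMap.compl₁₂_apply, LinearMap.mul_apply',
        monomial_mul_monomial h.mul_eq_smul_mul, h.coproduct_smul_monomial,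
        h.coproduct_monomial, Algebra.TensorProduct.tmul_mul_tmul, ← Units.val_mul, ← zpow_add]
  exact LinearMap.congr_fun₂ this a b

theorem coproduct_coassoc (h : IsQuantumTorusBasis q U V e) (a : A) :
    LinearMap.lTensor A ((coproduct V e).restrictScalars ℤ) (coproduct V e a)
      = TensorProduct.assoc ℤ A A A
          (LinearMap.rTensor A ((coproduct V e).restrictScalars ℤ) (coproduct V e a)) := by
  refine h.induction ?_ (fun a b ha hb => ?_) (fun c n m => ?_) a
  -- `simp` cannot apply `map_zero`/`map_add` to `assoc` here: its argument carries a different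
  -- (defeq) `ℤ`-module structure on `A ⊗[ℤ] A`.
  · simp only [map_zero]
    exact (LinearEquiv.map_zero _).symm
  · simp only [map_add, ha, hb]
    exact (LinearEquiv.map_add _ _ _).symm
  have hV : ((V ^ m : Aˣ) : A) = ((V ^ m * U ^ (0 : ℤ) : Aˣ) : A) := by simp
  rw [h.coproduct_smul_monomial, LinearMap.lTensor_tmul, LinearMap.rTensor_tmul,
    LinearMap.restrictScalars_apply, LinearMap.restrictScalars_apply,
    h.coproduct_smul_monomial, hV, h.coproduct_units_zpow_mul_zpow, ← hV]
  rfl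

theorem rTensor_mulRight_coproduct_sub_mem_rel (h : IsQuantumTorusBasis q U V e)
    {l : A} (hl : l ∈ laurentSubalgebra k U) (a : A) :
    LinearMap.rTensor A (LinearMap.mulRight ℤ l) (coproduct V e a)
      - LinearMap.lTensor A (LinearMap.mulRight ℤ l) (coproduct V e a)
      ∈ (bialgebroidData U V e).rel := by
  refine h.induction (by simp) (fun a b ha hb => ?_) (fun c n m => ?_) a
  · simpa only [map_add, add_sub_add_comm] using add_mem ha hb
  have hl' := units_zpow_mul_mul_zpow_neg_mem_laurentSubalgebra h.mul_eq_smul_mul m hl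
  set l' := ((V ^ m : Aˣ) : A) * l * ↑(V ^ (-m))
  have hVl : ((V ^ m : Aˣ) : A) * l = l' * ↑(V ^ m) := by
    simp [l', mul_assoc, ← Units.val_mul]
  have hxl : c • ((U ^ n * V ^ m : Aˣ) : A) * l = l' * (c • ((U ^ n * V ^ m : Aˣ) : A)) := by
    rw [smul_mul_assoc, mul_smul_comm, Units.val_mul, mul_assoc, hVl, ← mul_assoc,
      setLike_mul_comm (units_zpow_mem_laurentSubalgebra U n) hl', mul_assoc]
  rw [h.coproduct_smul_monomial, LinearMap.rTensor_tmul, LinearMap.lTensor_tmul,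
    LinearMap.mulRight_apply, LinearMap.mulRight_apply, hxl, hVl]
  exact mul_tmul_sub_tmul_mul_mem_rel V e hl' _ _

theorem counit_monomial (h : IsQuantumTorusBasis q U V e) (n m : ℤ) :
    (counit U e ((U ^ n * V ^ m : Aˣ) : A) : A) = ((U ^ n : Aˣ) : A) := by
  rw [← h.apply_eq (n, m), counit, e.constr_basis]

theorem coe_counit_smul_monomial (h : IsQuantumTorusBasis q U V e) (c : k) (n m : ℤ) :
    (counit U e (c • ((U ^ n * V ^ m : Aˣ) : A)) : A) = c • ((U ^ n : Aˣ) : A) := by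
  rw [map_smul, Subalgebra.coe_smul, h.counit_monomial]

theorem coe_counit_units_zpow (h : IsQuantumTorusBasis q U V e) (m : ℤ) :
    (counit U e ((V ^ m : Aˣ) : A) : A) = 1 := by
  simpa using h.counit_monomial 0 m

theorem counit_one (h : IsQuantumTorusBasis q U V e) : counit U e 1 = 1 :=
  Subtype.ext (by simpa using h.counit_monomial 0 0)

theorem counit_mul_counit (h : IsQuantumTorusBasis q U V e) (a b : A) :
    counit U e (a * counit U e b) = counit U e (a * b) := by
  have : ((LinearMap.mul k A).compl₂
        ((laurentSubalgebra k U).val.toLinearMap ∘ₗ counit U e)).compr₂ (counit U e)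
      = (LinearMap.mul k A).compr₂ (counit U e) :=
    h.bilinearMap_ext fun n m r s => Subtype.ext <| by
      simp only [LinearMap.compr₂_apply, LinearMap.compl₂_apply, LinearMap.comp_apply,
        AlgHom.toLinearMap_apply, Subalgebra.coe_val, LinearMap.mul_apply', h.counit_monomial]
      rw [show ((U ^ r : Aˣ) : A) = ((U ^ r * V ^ (0 : ℤ) : Aˣ) : A) by simp,
        monomial_mul_monomial h.mul_eq_smul_mul, monomial_mul_monomial h.mul_eq_smul_mul,
        h.coe_counit_smul_monomial, h.coe_counit_smul_monomial]
  exact LinearMap.congr_fun₂ this a b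

theorem coe_counit_mul_of_mem (h : IsQuantumTorusBasis q U V e) {x : A}
    (hx : x ∈ laurentSubalgebra k U) (a : A) :
    (counit U e (x * a) : A) = x * counit U e a := by
  revert a
  refine laurentSubalgebra_induction (by simp) (fun x y hx hy a => ?_) (fun c n => ?_) hx
  · simp [add_mul, hx, hy]
  refine h.induction (by simp) (fun a b ha hb => ?_) fun d r s => ?_
  · simp only [mul_add, map_add, AddMemClass.coe_add, ha, hb]
  have hU : ((U ^ n : Aˣ) : A) = ((U ^ n * V ^ (0 : ℤ) : Aˣ) : A) := by simp
  rw [smul_mul_smul_comm, hU, monomial_mul_monomial h.mul_eq_smul_mul, smul_smul,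
    h.coe_counit_smul_monomial, h.coe_counit_smul_monomial, ← hU]
  simp [zpow_add, smul_smul, mul_comm]

theorem counit_mul_of_mem (h : IsQuantumTorusBasis q U V e) (l : laurentSubalgebra k U)
    (a : A) : counit U e (l * a) = l * counit U e a :=
  Subtype.ext (h.coe_counit_mul_of_mem l.2 a)

theorem mul'_rTensor_counit_coproduct (h : IsQuantumTorusBasis q U V e) (a : A) :
    LinearMap.mul' ℤ A (LinearMap.rTensor A
        (((laurentSubalgebra k U).val.toLinearMap ∘ₗ counit U e).restrictScalars ℤ)
        (coproduct V e a)) = a := by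
  refine h.induction (by simp) (fun a b ha hb => by simp only [map_add, ha, hb])
    (fun c n m => ?_) a
  rw [h.coproduct_smul_monomial]
  simp only [LinearMap.rTensor_tmul, LinearMap.restrictScalars_apply, LinearMap.comp_apply,
    AlgHom.toLinearMap_apply, Subalgebra.coe_val, LinearMap.mul'_apply,
    h.coe_counit_smul_monomial]
  rw [smul_mul_assoc, Units.val_mul]

theorem mul'_comm_lTensor_counit_coproduct (h : IsQuantumTorusBasis q U V e) (a : A) :
    LinearMap.mul' ℤ A (TensorProduct.comm ℤ A A (LinearMap.lTensor A
        (((laurentSubalgebra k U).val.toLinearMap ∘ₗ counit U e).restrictScalars ℤ)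
        (coproduct V e a))) = a := by
  refine h.induction (by simp) (fun a b ha hb => by simp only [map_add, ha, hb])
    (fun c n m => ?_) a
  rw [h.coproduct_smul_monomial]
  simp [h.coe_counit_units_zpow]

noncomputable def bialgebroid (h : IsQuantumTorusBasis q U V e) :
    HopfAlgd.LeftBialgebroid A (laurentSubalgebra k U) where
  toLeftBialgebroidData := bialgebroidData U V e
  coassoc a := sub_mem_of_eq (h.coproduct_coassoc a)
  cros a l := h.rTensor_mulRight_coproduct_sub_mem_rel l.2 a
  Δ_one := sub_mem_of_eq h.coproduct_one
  Δ_mul a b := sub_mem_of_eq (h.coproduct_mul a b)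
  counit_s := h.mul'_rTensor_counit_coproduct
  counit_t := h.mul'_comm_lTensor_counit_coproduct
  π_one := h.counit_one
  π_s := h.counit_mul_counit
  π_t := h.counit_mul_counit
  π_bimod l l' a := by
    change counit U e (l * (l' * a)) = l * counit U e a * l'
    rw [h.counit_mul_of_mem, h.counit_mul_of_mem, mul_comm' l' _, mul_assoc]

theorem axsExpr_coproduct_sub_mem_rel (h : IsQuantumTorusBasis q U V e) (a : A) :
    HopfAlgd.axsExpr (coproduct V e).toAddMonoidHom (antipode U V e).toAddMonoidHom
        (coproduct V e a) - (1 : A) ⊗ₜ[ℤ] antipode U V e a ∈ (bialgebroidData U V e).rel := by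
  refine h.induction (by simp) (fun a b ha hb => ?_) (fun c n m => ?_) a
  · simpa only [map_add, tmul_add, add_sub_add_comm] using add_mem ha hb
  have hΔS : (coproduct V e).toAddMonoidHom
      ((antipode U V e).toAddMonoidHom (c • ((U ^ n * V ^ m : Aˣ) : A)))
      = (c • ((V ^ (-m) * U ^ n : Aˣ) : A)) ⊗ₜ[ℤ] ((V ^ (-m) : Aˣ) : A) := by
    simp only [LinearMap.toAddMonoidHom_coe, map_smul, h.antipode_monomial,
      h.coproduct_units_zpow_mul_zpow, smul_tmul']
  have := mul_tmul_sub_tmul_mul_mem_rel V e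
    (units_zpow_neg_mul_smul_monomial_mem_laurentSubalgebra h.mul_eq_smul_mul c n m) 1
    ((V ^ (-m) : Aˣ) : A)
  rw [h.coproduct_smul_monomial, HopfAlgd.axsExpr_tmul_of_eq hΔS]
  convert this using 3 <;> simp [h.antipode_monomial, mul_assoc, ← Units.val_mul]

theorem axsiExpr_coproduct_sub_mem_rel (h : IsQuantumTorusBasis q U V e) (a : A) :
    HopfAlgd.axsiExpr (coproduct V e).toAddMonoidHom (antipode U V e).toAddMonoidHom
        (coproduct V e a) - antipode U V e a ⊗ₜ[ℤ] (1 : A) ∈ (bialgebroidData U V e).rel := by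
  refine h.induction (by simp) (fun a b ha hb => ?_) (fun c n m => ?_) a
  · simpa only [map_add, add_tmul, add_sub_add_comm] using add_mem ha hb
  have hΔS : (coproduct V e).toAddMonoidHom ((antipode U V e).toAddMonoidHom ((V ^ m : Aˣ) : A))
      = ((V ^ (-m) : Aˣ) : A) ⊗ₜ[ℤ] ((V ^ (-m) : Aˣ) : A) := by
    have hV : ((V ^ m : Aˣ) : A) = ((U ^ (0 : ℤ) * V ^ m : Aˣ) : A) := by simp
    rw [LinearMap.toAddMonoidHom_coe, LinearMap.toAddMonoidHom_coe, hV, h.antipode_monomial,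
      h.coproduct_units_zpow_mul_zpow]
    simp
  have := neg_mem (mul_tmul_sub_tmul_mul_mem_rel V e
    (units_zpow_neg_mul_smul_monomial_mem_laurentSubalgebra h.mul_eq_smul_mul c n m)
    ((V ^ (-m) : Aˣ) : A) 1)
  rw [neg_sub] at this
  rw [h.coproduct_smul_monomial, HopfAlgd.axsiExpr_tmul_of_eq hΔS]
  convert this using 3 <;> simp [h.antipode_monomial, mul_assoc, ← Units.val_mul]

theorem isHopfAlgebroid (h : IsQuantumTorusBasis q U V e) :
    HopfAlgd.IsHopfAlgebroid h.bialgebroid h.antipodeEquiv where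
  anti_mul := h.antipode_mul
  one_map := h.antipode_one
  S_t l := h.antipode_of_mem l.2
  axs := h.axsExpr_coproduct_sub_mem_rel
  axsi := h.axsiExpr_coproduct_sub_mem_rel

end IsQuantumTorusBasis

end QuantumTorus

open HopfAlgd in
/-- The algebraic quantum torus `T_q` (the `k`-algebra with invertible
generators `U, V` satisfying `UV = qVU` and basis `{UⁿVᵐ}`) is a Hopf algebroid over the
base `L = k[U, U⁻¹]`, with `s_L = t_L` the inclusion, `γ_L(UⁿVᵐ) = UⁿVᵐ ⊗_L Vᵐ`,
`π_L(UⁿVᵐ) = Uⁿ` and antipode `S(UⁿVᵐ) = V⁻ᵐUⁿ`. -/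
theorem statement9 (k : Type*) [Field k] (q : kˣ) (A : Type*) [Ring A] [Algebra k A]
    (U V : Aˣ) (hq : ((U : A) * (V : A)) = (q : k) • ((V : A) * (U : A)))
    (bas : Module.Basis (ℤ × ℤ) k A)
    (hbas : ∀ p : ℤ × ℤ, bas p = ((U ^ p.1 * V ^ p.2 : Aˣ) : A)) :
    ∃ (B : HopfAlgd.LeftBialgebroid A
            (Algebra.adjoin k ({(U : A), ((U⁻¹ : Aˣ) : A)} : Set A)))
      (S : A ≃+ A),
      HopfAlgd.IsHopfAlgebroid B S ∧
      (∀ l, B.s l = (l : A)) ∧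
      (∀ l, B.t l = (l : A)) ∧
      (∀ n m : ℤ, B.Δ ((U ^ n * V ^ m : Aˣ) : A)
          - ((U ^ n * V ^ m : Aˣ) : A) ⊗ₜ[ℤ] ((V ^ m : Aˣ) : A) ∈ B.rel) ∧
      (∀ n m : ℤ, (B.π ((U ^ n * V ^ m : Aˣ) : A) : A) = ((U ^ n : Aˣ) : A)) ∧
      (∀ n m : ℤ, S ((U ^ n * V ^ m : Aˣ) : A) = ((V ^ (-m) * U ^ n : Aˣ) : A)) := by
  have h : QuantumTorus.IsQuantumTorusBasis q U V bas := ⟨hq, hbas⟩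
  exact ⟨h.bialgebroid, h.antipodeEquiv, h.isHopfAlgebroid, fun _ => rfl, fun _ => rfl,
    fun n m => sub_mem_of_eq (h.coproduct_monomial n m), h.counit_monomial, h.antipode_monomial⟩
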